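/- Let L > 0, T > 0, λ > 0, ε ∈ (0,1], let φ, g : [−L,L] × [0,T] → ℝ be continuous, and let η : [−L,L] × [0,T] → ℝ be sufficiently smooth (all derivatives appearing below continuous) and satisfy the damped perturbation equation η_tt − λ η_txx − η_xx + ε⁻¹(sin(φ + ε η) − sin φ) = g on (−L,L) × (0,T), with Neumann boundary conditions η_x(±L,t) = 0 and η_tx(±L,t) = 0 for all t, and initial data η(x,0) = u₀(x), η_t(x,0) = v₀(x). Then there exists a constant C depending only on T and λ such that for all t ∈ [0,T]: ∫_{−L}^{L} η_t(x,t)² dx + ∫_{−L}^{L} (η(x,t)² + η_x(x,t)²) dx + λ ∫_0^t ∫_{−L}^{L} η_tx(x,s)² dx ds ≤ C ( ∫_{−L}^{L} (u₀² + (u₀')²) dx + ∫_{−L}^{L} v₀² dx + ∫_0^T ∫_{−L}^{L} g² dx ds ). -/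

import Mathlib

open Set

/-- Partial derivative in time of a function of (x, t). -/
noncomputable def pdt (f : ℝ → ℝ → ℝ) (x t : ℝ) : ℝ := deriv (fun s => f x s) t

/-- Partial derivative in space of a function of (x, t). -/
noncomputable def pdx (f : ℝ → ℝ → ℝ) (x t : ℝ) : ℝ := deriv (fun y => f y t) x

/-!
Multiply the equation by `η_t` and integrate by parts in `x`. Pointwise, the density
`e = η_t² + η² + η_x²` and the flux `J = 2 η_t (λ η_tx + η_x)` satisfy
`e_t + λ η_tx² ≤ J_x + 3 e + g²`: since `sin` is 1-Lipschitz, the nonlinearity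
`ε⁻¹(sin(φ + εη) - sin φ)` is bounded by `|η|`, and the cross terms are absorbed by Young's
inequality. The Neumann conditions make `J` vanish at `±L`, so the energy `E = ∫ e` and the
dissipation `D = ∫ η_tx²` satisfy `E' + λ D ≤ 3 E + ∫ g²`. Grönwall's inequality for
`E + λ ∫₀ᵗ D + ∫ₜᵀ ∫ g²` then gives the estimate with `C = e^{3T}`.
-/

open MeasureTheory Real Function

section PartialDerivatives

variable {f : ℝ → ℝ → ℝ}

theorem pdt_eq_fderiv {x t : ℝ} (hf : DifferentiableAt ℝ (uncurry f) (x, t)) :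
    pdt f x t = fderiv ℝ (uncurry f) (x, t) (0, 1) :=
  (hf.hasFDerivAt.comp_hasDerivAt t ((hasDerivAt_const t x).prodMk (hasDerivAt_id t))).deriv

theorem pdx_eq_fderiv {x t : ℝ} (hf : DifferentiableAt ℝ (uncurry f) (x, t)) :
    pdx f x t = fderiv ℝ (uncurry f) (x, t) (1, 0) := by
  have h := hf.hasFDerivAt.comp_hasDerivAt x ((hasDerivAt_id x).prodMk (hasDerivAt_const x t))
  exact h.deriv

theorem hasDerivAt_pdt {x t : ℝ} (hf : DifferentiableAt ℝ (uncurry f) (x, t)) :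
    HasDerivAt (f x) (pdt f x t) t :=
  (hf.comp t ((differentiableAt_const x).prodMk differentiableAt_id)).hasDerivAt

theorem hasDerivAt_pdx {x t : ℝ} (hf : DifferentiableAt ℝ (uncurry f) (x, t)) :
    HasDerivAt (fun y => f y t) (pdx f x t) x := by
  rw [pdx_eq_fderiv hf]
  exact hf.hasFDerivAt.comp_hasDerivAt x ((hasDerivAt_id x).prodMk (hasDerivAt_const x t))

theorem uncurry_pdt_eq (hf : Differentiable ℝ (uncurry f)) :
    uncurry (pdt f) = fun p => fderiv ℝ (uncurry f) p (0, 1) :=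
  funext fun p => pdt_eq_fderiv (hf p)

theorem uncurry_pdx_eq (hf : Differentiable ℝ (uncurry f)) :
    uncurry (pdx f) = fun p => fderiv ℝ (uncurry f) p (1, 0) :=
  funext fun p => pdx_eq_fderiv (hf p)

theorem ContDiff.uncurry_pdt {m n : WithTop ℕ∞} (hf : ContDiff ℝ n (uncurry f))
    (hmn : m + 1 ≤ n) : ContDiff ℝ m (uncurry (pdt f)) := by
  rw [uncurry_pdt_eq (hf.differentiable (ne_bot_of_le_ne_bot (by simp) hmn))]
  exact (hf.fderiv_right hmn).clm_apply contDiff_const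

theorem ContDiff.uncurry_pdx {m n : WithTop ℕ∞} (hf : ContDiff ℝ n (uncurry f))
    (hmn : m + 1 ≤ n) : ContDiff ℝ m (uncurry (pdx f)) := by
  rw [uncurry_pdx_eq (hf.differentiable (ne_bot_of_le_ne_bot (by simp) hmn))]
  exact (hf.fderiv_right hmn).clm_apply contDiff_const

theorem pdt_pdx (hf : ContDiff ℝ 2 (uncurry f)) (x t : ℝ) :
    pdt (pdx f) x t = pdx (pdt f) x t := by
  have hd : Differentiable ℝ (uncurry f) := hf.differentiable (by norm_num)
  have hdd : Differentiable ℝ (fderiv ℝ (uncurry f)) :=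
    (hf.fderiv_right (m := 1) (by norm_num)).differentiable one_ne_zero
  rw [pdt_eq_fderiv ((hf.uncurry_pdx (m := 1) (by norm_num)).differentiable one_ne_zero _),
    pdx_eq_fderiv ((hf.uncurry_pdt (m := 1) (by norm_num)).differentiable one_ne_zero _),
    uncurry_pdx_eq hd, uncurry_pdt_eq hd, fderiv_clm_apply (hdd _) (differentiableAt_const _),
    fderiv_clm_apply (hdd _) (differentiableAt_const _)]
  simpa using hf.contDiffAt.isSymmSndFDerivAt (by simp) (0, 1) (1, 0)

end PartialDerivatives

theorem continuous_intervalIntegral_of_continuous_uncurry {a b : ℝ} {f : ℝ → ℝ → ℝ}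
    (hf : Continuous (uncurry f)) : Continuous fun t => ∫ x in a..b, f x t :=
  intervalIntegral.continuous_parametric_intervalIntegral_of_continuous' (f := fun t x => f x t)
    (hf.comp continuous_swap) a b

theorem hasDerivAt_intervalIntegral_of_contDiff {f : ℝ → ℝ → ℝ}
    (hf : ContDiff ℝ 1 (uncurry f)) (a b t₀ : ℝ) :
    HasDerivAt (fun t => ∫ x in a..b, f x t) (∫ x in a..b, pdt f x t₀) t₀ := by
  have hf' : Continuous (uncurry (pdt f)) := (hf.uncurry_pdt (m := 0) (by norm_num)).continuous
  obtain ⟨M, hM⟩ : ∃ M, ∀ p ∈ uIcc a b ×ˢ Icc (t₀ - 1) (t₀ + 1), ‖uncurry (pdt f) p‖ ≤ M :=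
    (isCompact_uIcc.prod isCompact_Icc).exists_bound_of_continuousOn hf'.continuousOn
  refine (intervalIntegral.hasDerivAt_integral_of_dominated_loc_of_deriv_le
    (F := fun t x => f x t) (bound := fun _ => M) (Metric.ball_mem_nhds t₀ one_pos)
    (Filter.Eventually.of_forall fun t => (hf.continuous.uncurry_right t).aestronglyMeasurable)
    ((hf.continuous.uncurry_right t₀).intervalIntegrable _ _)
    (hf'.uncurry_right t₀).aestronglyMeasurable
    (Filter.Eventually.of_forall fun x hx t ht =>
      hM (x, t) ⟨uIoc_subset_uIcc hx, Ioo_subset_Icc_self (Real.ball_eq_Ioo t₀ 1 ▸ ht)⟩)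
    intervalIntegrable_const
    (Filter.Eventually.of_forall fun x _ t _ =>
      hasDerivAt_pdt (hf.differentiable one_ne_zero _))).2

theorem integral_le_of_le_deriv_add {a b : ℝ} (hab : a ≤ b) {f h j j' : ℝ → ℝ}
    (hj : ∀ x ∈ uIcc a b, HasDerivAt j (j' x) x) (hja : j a = 0) (hjb : j b = 0)
    (hf : IntervalIntegrable f volume a b) (hh : IntervalIntegrable h volume a b)
    (hj' : IntervalIntegrable j' volume a b) (hle : ∀ x ∈ Ioo a b, f x ≤ j' x + h x) :
    ∫ x in a..b, f x ≤ ∫ x in a..b, h x :=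
  calc ∫ x in a..b, f x ≤ ∫ x in a..b, (j' x + h x) :=
        intervalIntegral.integral_mono_on_of_le_Ioo hab hf (hj'.add hh) hle
    _ = ∫ x in a..b, h x := by
        rw [intervalIntegral.integral_add hj' hh,
          intervalIntegral.integral_eq_sub_of_hasDerivAt hj hj', hja, hjb, sub_zero, zero_add]

theorem sq_inv_mul_sin_add_mul_sub_sin_le {ε : ℝ} (hε : 0 < ε) (a y : ℝ) :
    (ε⁻¹ * (sin (a + ε * y) - sin a)) ^ 2 ≤ y ^ 2 := by
  have h := abs_sin_sub_sin_le (a + ε * y) a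
  rw [add_sub_cancel_left, abs_mul, abs_of_pos hε, ← inv_mul_le_iff₀ hε] at h
  rw [← sq_abs, ← sq_abs y, abs_mul, abs_inv, abs_of_pos hε]
  exact pow_le_pow_left₀ (by positivity) h 2

theorem le_mul_exp_of_hasDerivAt_le_mul {f f' : ℝ → ℝ} {K a b : ℝ}
    (hf : ContinuousOn f (Icc a b)) (hf' : ∀ t ∈ Ioo a b, HasDerivAt f (f' t) t)
    (hbound : ∀ t ∈ Ioo a b, f' t ≤ K * f t) :
    ∀ t ∈ Icc a b, f t ≤ f a * exp (K * (t - a)) := by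
  have hanti : AntitoneOn (fun t => f t * exp (-(K * t))) (Icc a b) := by
    refine antitoneOn_of_hasDerivWithinAt_nonpos (convex_Icc a b) (hf.mul (by fun_prop))
      (f' := fun t => (f' t - K * f t) * exp (-(K * t))) ?_ ?_
    · rw [interior_Icc]
      intro t ht
      exact ((hf' t ht).mul ((hasDerivAt_id t).const_mul K).neg.exp).hasDerivWithinAt.congr_deriv
        (by simp only [Pi.neg_apply, id]; ring)
    · rw [interior_Icc]
      intro t ht
      exact mul_nonpos_of_nonpos_of_nonneg (sub_nonpos.2 (hbound t ht)) (exp_pos _).le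
  intro t ht
  have hmono := hanti ⟨le_rfl, ht.1.trans ht.2⟩ ht ht.1
  calc f t = f t * exp (-(K * t)) * exp (K * t) := by rw [mul_assoc, ← exp_add]; simp
    _ ≤ f a * exp (-(K * a)) * exp (K * t) := by gcongr
    _ = f a * exp (K * (t - a)) := by rw [mul_assoc, ← exp_add]; ring_nf

theorem add_mul_integral_le_exp_mul {E E' D Q : ℝ → ℝ} {lam K T : ℝ} (hlam : 0 ≤ lam)
    (hK : 0 ≤ K) (hE : ContinuousOn E (Icc 0 T)) (hE' : ∀ t ∈ Ioo 0 T, HasDerivAt E (E' t) t)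
    (hD : Continuous D) (hQ : Continuous Q) (hD₀ : ∀ t, 0 ≤ D t) (hQ₀ : ∀ t, 0 ≤ Q t)
    (hE₀ : 0 ≤ E 0) (hbound : ∀ t ∈ Ioo 0 T, E' t + lam * D t ≤ K * E t + Q t) :
    ∀ t ∈ Icc 0 T, E t + lam * ∫ s in 0..t, D s ≤ exp (K * T) * (E 0 + ∫ s in 0..T, Q s) := by
  have hQle : ∀ t ∈ Icc 0 T, ∫ s in 0..t, Q s ≤ ∫ s in 0..T, Q s := fun t ht =>
    intervalIntegral.integral_mono_interval le_rfl ht.1 ht.2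
      (Filter.Eventually.of_forall hQ₀) (hQ.intervalIntegrable 0 T)
  generalize ∫ s in 0..T, Q s = B at hQle ⊢
  have hΦ := le_mul_exp_of_hasDerivAt_le_mul (K := K) (a := 0) (b := T)
    (f := fun t => E t + lam * (∫ s in 0..t, D s) - (∫ s in 0..t, Q s) + B)
    (f' := fun t => E' t + lam * D t - Q t) ?_ ?_ ?_
  · intro t ht
    have hB : 0 ≤ B :=
      (intervalIntegral.integral_nonneg ht.1 fun s _ => hQ₀ s).trans (hQle t ht)
    calc E t + lam * ∫ s in 0..t, D s
        ≤ E t + lam * (∫ s in 0..t, D s) - (∫ s in 0..t, Q s) + B := by linarith [hQle t ht]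
      _ ≤ (E 0 + B) * exp (K * t) := by simpa using hΦ t ht
      _ ≤ exp (K * T) * (E 0 + B) := by rw [mul_comm]; gcongr; exact ht.2
  · exact ((hE.add (continuous_const.mul (intervalIntegral.continuous_primitive (μ := volume)
      (fun _ _ => hD.intervalIntegrable _ _) 0)).continuousOn).sub
      (intervalIntegral.continuous_primitive (μ := volume)
        (fun _ _ => hQ.intervalIntegrable _ _) 0).continuousOn).add continuousOn_const
  · intro t ht
    exact (((hE' t ht).add ((hD.integral_hasStrictDerivAt 0 t).hasDerivAt.const_mul lam)).sub
      (hQ.integral_hasStrictDerivAt 0 t).hasDerivAt).add_const B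
  · -- `Φ' ≤ K E ≤ K Φ`, as `Φ - E = λ ∫₀ᵗ D + ∫ₜᵀ Q ≥ 0`
    intro t ht
    have hD' : 0 ≤ lam * ∫ s in 0..t, D s :=
      mul_nonneg hlam (intervalIntegral.integral_nonneg ht.1.le fun s _ => hD₀ s)
    have hΦE := mul_nonneg hK (add_nonneg hD' (sub_nonneg.2 (hQle t (Ioo_subset_Icc_self ht))))
    linarith [hbound t ht]

noncomputable def energyDensity (η : ℝ → ℝ → ℝ) (x t : ℝ) : ℝ :=
  pdt η x t ^ 2 + (η x t ^ 2 + pdx η x t ^ 2)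

noncomputable def energy (L : ℝ) (η : ℝ → ℝ → ℝ) (t : ℝ) : ℝ :=
  ∫ x in (-L)..L, energyDensity η x t

noncomputable def energyFlux (lam : ℝ) (η : ℝ → ℝ → ℝ) (x t : ℝ) : ℝ :=
  2 * pdt η x t * (lam * pdx (pdt η) x t + pdx η x t)

section Energy

variable {L : ℝ} {η : ℝ → ℝ → ℝ}

theorem ContDiff.uncurry_energyDensity (hη : ContDiff ℝ 2 (uncurry η)) :
    ContDiff ℝ 1 (uncurry (energyDensity η)) :=
  ((hη.uncurry_pdt le_rfl).pow 2).add
    (((hη.of_le (by norm_num)).pow 2).add ((hη.uncurry_pdx le_rfl).pow 2))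

theorem pdt_energyDensity (hη : ContDiff ℝ 2 (uncurry η)) (x t : ℝ) :
    pdt (energyDensity η) x t = 2 * pdt η x t * pdt (pdt η) x t
      + (2 * η x t * pdt η x t + 2 * pdx η x t * pdx (pdt η) x t) := by
  have h₀ := hasDerivAt_pdt (hη.differentiable two_ne_zero (x, t))
  have h₁ := hasDerivAt_pdt ((hη.uncurry_pdt le_rfl).differentiable one_ne_zero (x, t))
  have h₂ := hasDerivAt_pdt ((hη.uncurry_pdx le_rfl).differentiable one_ne_zero (x, t))
  rw [← pdt_pdx hη]
  exact ((h₁.pow 2).add ((h₀.pow 2).add (h₂.pow 2))).deriv.trans (by ring)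

theorem hasDerivAt_energy (hη : ContDiff ℝ 2 (uncurry η)) (t : ℝ) :
    HasDerivAt (energy L η) (∫ x in (-L)..L, pdt (energyDensity η) x t) t :=
  hasDerivAt_intervalIntegral_of_contDiff hη.uncurry_energyDensity _ _ t

theorem ContDiff.uncurry_energyFlux {lam : ℝ} (hη : ContDiff ℝ 3 (uncurry η)) :
    ContDiff ℝ 1 (uncurry (energyFlux lam η)) := by
  have hη₁ : ContDiff ℝ 2 (uncurry (pdt η)) := hη.uncurry_pdt (by norm_num)
  exact (contDiff_const.mul (hη₁.of_le (by norm_num))).mul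
    (contDiff_const.mul (hη₁.uncurry_pdx le_rfl) |>.add (hη.uncurry_pdx (by norm_num)))

theorem pdx_energyFlux {lam : ℝ} (hη : ContDiff ℝ 3 (uncurry η)) (x t : ℝ) :
    pdx (energyFlux lam η) x t = 2 * pdx (pdt η) x t * (lam * pdx (pdt η) x t + pdx η x t)
      + 2 * pdt η x t * (lam * pdx (pdx (pdt η)) x t + pdx (pdx η) x t) := by
  have hη₁ : ContDiff ℝ 2 (uncurry (pdt η)) := hη.uncurry_pdt (by norm_num)
  have h₁ := hasDerivAt_pdx (hη₁.differentiable two_ne_zero (x, t))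
  have h₁₂ := hasDerivAt_pdx ((hη₁.uncurry_pdx le_rfl).differentiable one_ne_zero (x, t))
  have h₂ := hasDerivAt_pdx ((hη.uncurry_pdx (m := 2) (by norm_num)).differentiable
    two_ne_zero (x, t))
  exact ((h₁.const_mul 2).fun_mul ((h₁₂.const_mul lam).fun_add h₂)).deriv.trans (by ring)

theorem pdt_energyDensity_add_le {lam ε x t : ℝ} {φ g : ℝ → ℝ → ℝ} (hlam : 0 ≤ lam)
    (hε : 0 < ε) (hη : ContDiff ℝ 3 (uncurry η))
    (hpde : pdt (pdt η) x t - lam * pdx (pdx (pdt η)) x t - pdx (pdx η) x t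
        + ε⁻¹ * (sin (φ x t + ε * η x t) - sin (φ x t)) = g x t) :
    pdt (energyDensity η) x t + lam * pdx (pdt η) x t ^ 2
      ≤ pdx (energyFlux lam η) x t + (3 * energyDensity η x t + g x t ^ 2) := by
  set N := ε⁻¹ * (sin (φ x t + ε * η x t) - sin (φ x t))
  have hN : N ^ 2 ≤ η x t ^ 2 := sq_inv_mul_sin_add_mul_sub_sin_le hε (φ x t) (η x t)
  have hptt : pdt (pdt η) x t
      = lam * pdx (pdx (pdt η)) x t + pdx (pdx η) x t - N + g x t := by linarith
  rw [pdt_energyDensity (hη.of_le (by norm_num)), pdx_energyFlux hη, energyDensity, hptt]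
  nlinarith [sq_nonneg (pdt η x t - g x t), sq_nonneg (pdt η x t - η x t),
    sq_nonneg (pdt η x t + N), mul_nonneg hlam (sq_nonneg (pdx (pdt η) x t)),
    sq_nonneg (pdx η x t)]

theorem deriv_energy_add_le {lam ε t : ℝ} {φ g : ℝ → ℝ → ℝ} (hL : -L ≤ L) (hlam : 0 ≤ lam)
    (hε : 0 < ε) (hη : ContDiff ℝ 3 (uncurry η)) (hg : Continuous (uncurry g))
    (hpde : ∀ x ∈ Ioo (-L) L, pdt (pdt η) x t - lam * pdx (pdx (pdt η)) x t - pdx (pdx η) x t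
        + ε⁻¹ * (sin (φ x t + ε * η x t) - sin (φ x t)) = g x t)
    (hbc : pdx η (-L) t = 0 ∧ pdx η L t = 0 ∧ pdx (pdt η) (-L) t = 0 ∧ pdx (pdt η) L t = 0) :
    deriv (energy L η) t + lam * ∫ x in (-L)..L, pdx (pdt η) x t ^ 2
      ≤ 3 * energy L η t + ∫ x in (-L)..L, g x t ^ 2 := by
  have hη₂ : ContDiff ℝ 2 (uncurry η) := hη.of_le (by norm_num)
  have hJ : ContDiff ℝ 1 (uncurry (energyFlux lam η)) := hη.uncurry_energyFlux
  have ce : Continuous fun x => energyDensity η x t :=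
    hη₂.uncurry_energyDensity.continuous.uncurry_right t
  have cet : Continuous fun x => pdt (energyDensity η) x t :=
    (hη₂.uncurry_energyDensity.uncurry_pdt (m := 0) (by norm_num)).continuous.uncurry_right t
  have cJx : Continuous fun x => pdx (energyFlux lam η) x t :=
    (hJ.uncurry_pdx (m := 0) (by norm_num)).continuous.uncurry_right t
  have cd : Continuous fun x => pdx (pdt η) x t :=
    ((hη.uncurry_pdt (m := 2) (by norm_num)).uncurry_pdx (m := 0)
      (by norm_num)).continuous.uncurry_right t
  have cg : Continuous fun x => g x t := hg.uncurry_right t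
  have key := integral_le_of_le_deriv_add hL (j := fun x => energyFlux lam η x t)
    (f := fun x => pdt (energyDensity η) x t + lam * pdx (pdt η) x t ^ 2)
    (h := fun x => 3 * energyDensity η x t + g x t ^ 2)
    (fun x _ => hasDerivAt_pdx (hJ.differentiable one_ne_zero (x, t)))
    (by simp [energyFlux, hbc]) (by simp [energyFlux, hbc])
    ((cet.fun_add (continuous_const.fun_mul (cd.fun_pow 2))).intervalIntegrable _ _)
    (((continuous_const.fun_mul ce).fun_add (cg.fun_pow 2)).intervalIntegrable _ _)
    (cJx.intervalIntegrable _ _)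
    fun x hx => pdt_energyDensity_add_le hlam hε hη (hpde x hx)
  rw [intervalIntegral.integral_add (cet.intervalIntegrable _ _)
      ((continuous_const.fun_mul (cd.fun_pow 2)).intervalIntegrable _ _),
    intervalIntegral.integral_add ((continuous_const.fun_mul ce).intervalIntegrable _ _)
      ((cg.fun_pow 2).intervalIntegrable _ _),
    intervalIntegral.integral_const_mul, intervalIntegral.integral_const_mul] at key
  rwa [(hasDerivAt_energy hη₂ t).deriv]

theorem energy_eq_add (hη : ContDiff ℝ 1 (uncurry η)) (t : ℝ) :
    energy L η t
      = (∫ x in (-L)..L, pdt η x t ^ 2) + ∫ x in (-L)..L, (η x t ^ 2 + pdx η x t ^ 2) := by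
  have c0 : Continuous fun x => η x t := hη.continuous.uncurry_right t
  have c1 : Continuous fun x => pdt η x t :=
    (hη.uncurry_pdt (m := 0) (by norm_num)).continuous.uncurry_right t
  have c2 : Continuous fun x => pdx η x t :=
    (hη.uncurry_pdx (m := 0) (by norm_num)).continuous.uncurry_right t
  exact intervalIntegral.integral_add ((c1.fun_pow 2).intervalIntegrable _ _)
    (((c0.fun_pow 2).fun_add (c2.fun_pow 2)).intervalIntegrable _ _)

theorem energy_zero_eq {u₀ v₀ : ℝ → ℝ} (hL : -L ≤ L) (hη : ContDiff ℝ 1 (uncurry η))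
    (hic : ∀ x ∈ Icc (-L) L, η x 0 = u₀ x ∧ pdt η x 0 = v₀ x) :
    energy L η 0
      = (∫ x in (-L)..L, v₀ x ^ 2) + ∫ x in (-L)..L, (u₀ x ^ 2 + deriv u₀ x ^ 2) := by
  rw [energy_eq_add hη]
  congr 1
  · exact intervalIntegral.integral_congr fun x hx => by rw [(hic x (uIcc_of_le hL ▸ hx)).2]
  · refine intervalIntegral.integral_congr_Ioo_of_le hL fun x hx => ?_
    have hu : u₀ =ᶠ[nhds x] fun y => η y 0 :=
      Filter.eventually_of_mem (Icc_mem_nhds hx.1 hx.2) fun y hy => (hic y hy).1.symm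
    rw [hu.deriv_eq, (hic x (Ioo_subset_Icc_self hx)).1]
    rfl

end Energy

theorem damped_energy_estimate_general (T lam : ℝ) (hlam : 0 < lam) :
    ∃ C > 0, ∀ (L ε : ℝ) (φ g η : ℝ → ℝ → ℝ) (u₀ v₀ : ℝ → ℝ),
      0 < L → 0 < ε → ε ≤ 1 →
      Continuous (Function.uncurry φ) → Continuous (Function.uncurry g) →
      ContDiff ℝ 3 (Function.uncurry η) →
      (∀ x ∈ Ioo (-L) L, ∀ t ∈ Ioo (0 : ℝ) T,
        pdt (pdt η) x t - lam * pdx (pdx (pdt η)) x t - pdx (pdx η) x t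
          + ε⁻¹ * (Real.sin (φ x t + ε * η x t) - Real.sin (φ x t)) = g x t) →
      (∀ t ∈ Icc (0 : ℝ) T,
        pdx η (-L) t = 0 ∧ pdx η L t = 0 ∧
        pdx (pdt η) (-L) t = 0 ∧ pdx (pdt η) L t = 0) →
      (∀ x ∈ Icc (-L) L, η x 0 = u₀ x ∧ pdt η x 0 = v₀ x) →
      ∀ t ∈ Icc (0 : ℝ) T,
        (∫ x in (-L)..L, (pdt η x t) ^ 2)
            + (∫ x in (-L)..L, ((η x t) ^ 2 + (pdx η x t) ^ 2))
            + lam * ∫ s in (0 : ℝ)..t, ∫ x in (-L)..L, (pdx (pdt η) x s) ^ 2 ≤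
          C * ((∫ x in (-L)..L, ((u₀ x) ^ 2 + (deriv u₀ x) ^ 2))
              + (∫ x in (-L)..L, (v₀ x) ^ 2)
              + ∫ s in (0 : ℝ)..T, ∫ x in (-L)..L, (g x s) ^ 2) := by
  refine ⟨exp (3 * T), exp_pos _, fun L ε φ g η u₀ v₀ hL hε _ _ hg hη hpde hbc hic t ht => ?_⟩
  have hL' : -L ≤ L := by linarith
  have hη₁ : ContDiff ℝ 1 (uncurry η) := hη.of_le (by norm_num)
  have hη₂ : ContDiff ℝ 2 (uncurry η) := hη.of_le (by norm_num)
  have hdiss : Continuous fun s => ∫ x in (-L)..L, pdx (pdt η) x s ^ 2 :=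
    continuous_intervalIntegral_of_continuous_uncurry (((hη.uncurry_pdt (m := 2)
      (by norm_num)).uncurry_pdx (m := 0) (by norm_num)).continuous.pow 2)
  have hforce : Continuous fun s => ∫ x in (-L)..L, g x s ^ 2 :=
    continuous_intervalIntegral_of_continuous_uncurry (hg.pow 2)
  have key := add_mul_integral_le_exp_mul hlam.le (K := 3) (by norm_num)
    (continuous_iff_continuousAt.2 fun s => (hasDerivAt_energy hη₂ s).continuousAt).continuousOn
    (fun s _ => (hasDerivAt_energy hη₂ s).differentiableAt.hasDerivAt) hdiss hforce
    (fun s => intervalIntegral.integral_nonneg hL' fun x _ => sq_nonneg _)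
    (fun s => intervalIntegral.integral_nonneg hL' fun x _ => sq_nonneg _)
    (intervalIntegral.integral_nonneg hL' fun x _ => by unfold energyDensity; positivity)
    (fun s hs => deriv_energy_add_le hL' hlam.le hε hη hg (fun x hx => hpde x hx s hs)
      (hbc s (Ioo_subset_Icc_self hs))) t ht
  rw [energy_eq_add hη₁, energy_zero_eq hL' hη₁ hic] at key
  linarith

/-- Energy estimate for the damped perturbation equation
`η_tt − λ η_txx − η_xx + ε⁻¹(sin(φ + ε η) − sin φ) = g` with Neumann boundary
conditions: for `T > 0` and `λ > 0` there is a constant `C > 0` depending only on `T`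
and `λ` such that for all `t ∈ [0,T]`,
`∫ η_t² + ∫ (η² + η_x²) + λ ∫₀ᵗ ∫ η_tx² ≤ C (∫ (u₀² + u₀'²) + ∫ v₀² + ∫₀ᵀ ∫ g²)`. -/
theorem damped_energy_estimate (T lam : ℝ) (hT : 0 < T) (hlam : 0 < lam) :
    ∃ C > 0, ∀ (L ε : ℝ) (φ g η : ℝ → ℝ → ℝ) (u₀ v₀ : ℝ → ℝ),
      0 < L → 0 < ε → ε ≤ 1 →
      Continuous (Function.uncurry φ) → Continuous (Function.uncurry g) →
      ContDiff ℝ 3 (Function.uncurry η) →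
      (∀ x ∈ Ioo (-L) L, ∀ t ∈ Ioo (0 : ℝ) T,
        pdt (pdt η) x t - lam * pdx (pdx (pdt η)) x t - pdx (pdx η) x t
          + ε⁻¹ * (Real.sin (φ x t + ε * η x t) - Real.sin (φ x t)) = g x t) →
      (∀ t ∈ Icc (0 : ℝ) T,
        pdx η (-L) t = 0 ∧ pdx η L t = 0 ∧
        pdx (pdt η) (-L) t = 0 ∧ pdx (pdt η) L t = 0) →
      (∀ x ∈ Icc (-L) L, η x 0 = u₀ x ∧ pdt η x 0 = v₀ x) →
      ∀ t ∈ Icc (0 : ℝ) T,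
        (∫ x in (-L)..L, (pdt η x t) ^ 2)
            + (∫ x in (-L)..L, ((η x t) ^ 2 + (pdx η x t) ^ 2))
            + lam * ∫ s in (0 : ℝ)..t, ∫ x in (-L)..L, (pdx (pdt η) x s) ^ 2 ≤
          C * ((∫ x in (-L)..L, ((u₀ x) ^ 2 + (deriv u₀ x) ^ 2))
              + (∫ x in (-L)..L, (v₀ x) ^ 2)
              + ∫ s in (0 : ℝ)..T, ∫ x in (-L)..L, (g x s) ^ 2) :=
  damped_energy_estimate_general T lam hlam
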